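/- (Lemma 3.) For every rational number X, every nonnegative integer c, and every nonnegative integer n, the determinant of the n×n matrix with (i,j) entry C(X, i-j+c) (1 ≤ i,j ≤ n) equals ∏_{i=1}^{n} (X+i-c)_c/(i)_c. -/

import Mathlib

/-!
Multiplying the Toeplitz matrix `(C(X, i - j + c))` on the right by the unitriangular Pascal
matrix `(C(j, i))` gives, by Chu–Vandermonde, the matrix `(C(X + j, i + c))`. Since
`C(i + c, c) C(y + c, i + c) = C(y + c, c) C(y, i)`, that matrix is a row and column rescaling of
`(C(X - c + j, i))`, which is the case `c = 0` of the same identity and so has determinant `1`: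
for `c = 0` the Toeplitz matrix is lower unitriangular.
-/

open Finset

/-- Generalized binomial coefficient `C(x,k)`. -/
def gbinom (x : ℚ) (k : ℤ) : ℚ :=
  if 0 ≤ k then (∏ m ∈ Finset.range k.toNat, (x - m)) / (k.toNat.factorial : ℚ) else 0

/-- Shifted factorial `(a)_k` with integer index. -/
def poch (a : ℚ) (k : ℤ) : ℚ :=
  if 0 ≤ k then ∏ m ∈ Finset.range k.toNat, (a + m)
  else 1 / ∏ m ∈ Finset.range (-k).toNat, (a - (m + 1))

/-- The matrix `M(x;b,c)`. -/
def Mmat (x : ℚ) (b c : ℕ) : Matrix (Fin (b + c)) (Fin (b + c)) ℚ := fun i j =>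
  if (i : ℕ) < c then
    (if (j : ℕ) < b then gbinom (x + (j : ℕ)) ((i : ℕ) : ℤ)
     else gbinom (2 * x + (j : ℕ)) ((i : ℕ) : ℤ))
  else if (i : ℕ) < b then
    (if (j : ℕ) < c then 0
     else if (j : ℕ) < b then gbinom (x + (j : ℕ)) ((i : ℕ) : ℤ)
     else gbinom (2 * x + (j : ℕ)) ((i : ℕ) : ℤ))
  else
    (if (j : ℕ) < c then 2 * gbinom (x + (j : ℕ)) (((i : ℕ) : ℤ) - (b : ℤ))
     else if (j : ℕ) < b then gbinom (x + (j : ℕ)) (((i : ℕ) : ℤ) - (b : ℤ))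
     else 0)

/-- `Δ(x;b,c)`. -/
def Δdet (x : ℚ) (b c : ℕ) : ℚ := (Mmat x b c).det

/-- The matrix `M'(x;b,c)`; column index `j` of the paper is `c + j'`. -/
def M'mat (x : ℚ) (b c : ℕ) : Matrix (Fin b) (Fin b) ℚ := fun i j =>
  if c + (j : ℕ) < b then
    gbinom (x + (c : ℕ)) (((i : ℕ) : ℤ) - ((c : ℤ) + (j : ℕ)) + (c : ℤ))
  else if (i : ℕ) < c then
    2 * gbinom (2 * x + (b : ℕ)) (((i : ℕ) : ℤ) - ((c : ℤ) + (j : ℕ)) + (b : ℤ))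
  else
    gbinom (2 * x + (b : ℕ)) (((i : ℕ) : ℤ) - ((c : ℤ) + (j : ℕ)) + (b : ℤ))

/-- `Δ'(x;b,c)`. -/
def Δ'det (x : ℚ) (b c : ℕ) : ℚ := (M'mat x b c).det

open Matrix

theorem gbinom_natCast_eq_choose (x : ℚ) (k : ℕ) : gbinom x k = Ring.choose x k := by
  rw [gbinom, if_pos (Int.natCast_nonneg k), Int.toNat_natCast, Ring.choose_eq_smul,
    ← descPochhammer_eval_eq_prod_range, smul_eq_mul, inv_mul_eq_div,
    ← descPochhammer_map (Int.castRingHom ℚ), Polynomial.eval_map,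
    ← Polynomial.eval₂_smulOneHom_eq_smeval]
  congr 2
  exact Subsingleton.elim _ _

theorem gbinom_of_neg (x : ℚ) {k : ℤ} (hk : k < 0) : gbinom x k = 0 :=
  if_neg hk.not_ge

theorem gbinom_add_natCast_eq_sum (x : ℚ) (j : ℕ) (k : ℤ) :
    gbinom (x + j) k = ∑ l ∈ range (j + 1), (j.choose l : ℚ) * gbinom x (k - l) := by
  obtain hk | hk := lt_or_ge k 0
  · rw [gbinom_of_neg _ hk]
    exact (sum_eq_zero fun l _ => by rw [gbinom_of_neg _ (by omega), mul_zero]).symm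
  lift k to ℕ using hk
  set f : ℕ → ℚ := fun l => (j.choose l : ℚ) * gbinom x (k - l)
  have hj : ∑ l ∈ range (j + 1), f l = ∑ l ∈ range (j + k + 1), f l :=
    sum_subset (range_subset_range.mpr (by omega)) fun l _ hl => by
      simp [f, Nat.choose_eq_zero_of_lt (by simpa using hl)]
  have hk : ∑ l ∈ range (k + 1), f l = ∑ l ∈ range (j + k + 1), f l :=
    sum_subset (range_subset_range.mpr (by omega)) fun l _ hl => by
      simp only [f]
      rw [gbinom_of_neg _ (by simp at hl; omega), mul_zero]
  rw [hj, ← hk, gbinom_natCast_eq_choose, add_comm, Ring.add_choose_eq _ (Commute.all _ _),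
    Nat.sum_antidiagonal_eq_sum_range_succ (fun l m => Ring.choose (j : ℚ) l * Ring.choose x m)]
  refine sum_congr rfl fun l hl => ?_
  simp only [f]
  rw [Ring.choose_natCast, ← Nat.cast_sub (by simpa [Nat.lt_succ_iff] using hl),
    gbinom_natCast_eq_choose]

theorem choose_mul_gbinom_add (y : ℚ) (c i : ℕ) :
    ((i + c).choose c : ℚ) * gbinom (y + c) (i + c : ℕ) = gbinom (y + c) c * gbinom y i := by
  simp only [gbinom_natCast_eq_choose]
  rw [← nsmul_eq_mul, Ring.choose_add_smul_choose]

theorem det_pascal (R : Type*) [CommRing R] (n : ℕ) :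
    det (of fun i j : Fin n => ((j : ℕ).choose i : R)) = 1 := by
  rw [det_of_isUpperTriangular]
  · simp
  · intro i j hij
    rw [of_apply, Nat.choose_eq_zero_of_lt (show (j : ℕ) < i from hij), Nat.cast_zero]

def gbinomToeplitz (x : ℚ) (c n : ℕ) : Matrix (Fin n) (Fin n) ℚ :=
  of fun i j => gbinom x ((i : ℕ) - (j : ℕ) + c)

theorem det_gbinomToeplitz_zero (x : ℚ) (n : ℕ) : (gbinomToeplitz x 0 n).det = 1 := by
  rw [det_of_isLowerTriangular]
  · simp [gbinomToeplitz, gbinom]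
  · intro i j hij
    exact gbinom_of_neg _ (by simp [show (i : ℕ) < j from hij])

theorem det_gbinom_add_eq_det_gbinomToeplitz (x : ℚ) (c n : ℕ) :
    det (of fun i j : Fin n => gbinom (x + (j : ℕ)) ((i : ℕ) + c)) =
      (gbinomToeplitz x c n).det := by
  suffices of (fun i j : Fin n => gbinom (x + (j : ℕ)) ((i : ℕ) + c)) =
      gbinomToeplitz x c n * of fun l j : Fin n => ((j : ℕ).choose l : ℚ) by
    rw [this, det_mul, det_pascal, mul_one]
  ext i j
  simp only [of_apply, mul_apply, gbinomToeplitz]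
  rw [gbinom_add_natCast_eq_sum,
    Fin.sum_univ_eq_sum_range (fun l => gbinom x (i - l + c) * ((j : ℕ).choose l : ℚ)),
    ← sum_subset (range_subset_range.mpr j.isLt) fun l _ hl => by
      simp [Nat.choose_eq_zero_of_lt (by simpa using hl)]]
  exact sum_congr rfl fun l _ => by rw [mul_comm, sub_add_eq_add_sub]

theorem det_gbinomToeplitz (x : ℚ) (c n : ℕ) :
    (gbinomToeplitz x c n).det =
      ∏ i ∈ range n, gbinom (x + i) c / ((i + c).choose c : ℚ) := by
  have hentry (i j : Fin n) : gbinom (x + (j : ℕ)) ((i : ℕ) + c) =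
      ((i + c : ℕ).choose c : ℚ)⁻¹ *
        (gbinom (x + (j : ℕ)) c * gbinom (x - c + (j : ℕ)) i) := by
    rw [show x + (j : ℕ) = x - c + (j : ℕ) + c by ring, ← choose_mul_gbinom_add,
      inv_mul_cancel_left₀ (mod_cast (Nat.choose_pos (by omega)).ne'), Nat.cast_add]
  have hshift := det_gbinom_add_eq_det_gbinomToeplitz (x - c) 0 n
  simp only [Nat.cast_zero, add_zero, det_gbinomToeplitz_zero] at hshift
  rw [← det_gbinom_add_eq_det_gbinomToeplitz]
  simp_rw [hentry]
  calc
    _ = (∏ i : Fin n, ((i + c : ℕ).choose c : ℚ)⁻¹) *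
        ((∏ j : Fin n, gbinom (x + (j : ℕ)) c) * 1) := by
      rw [← hshift, ← det_mul_row, ← det_mul_column]
      rfl
    _ = _ := by
      rw [mul_one, ← prod_mul_distrib,
        Fin.prod_univ_eq_prod_range (fun i => ((i + c).choose c : ℚ)⁻¹ * gbinom (x + i) c)]
      simp only [div_eq_inv_mul]

theorem poch_natCast_eq_factorial_mul_gbinom (a : ℚ) (c : ℕ) :
    poch a c = c.factorial * gbinom (a + c - 1) c := by
  rw [poch, if_pos (Int.natCast_nonneg c), gbinom, if_pos (Int.natCast_nonneg c),
    Int.toNat_natCast, mul_div_cancel₀ _ (by positivity), ← prod_range_reflect]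
  refine prod_congr rfl fun m hm => ?_
  rw [Nat.cast_sub (by grind), Nat.cast_sub (by grind)]
  push_cast
  ring

/-- Lemma 3: `det_{1≤i,j≤n} C(X, i-j+c) = ∏_{i=1}^n (X+i-c)_c/(i)_c`. -/
theorem lemma3 (X : ℚ) (c : ℕ) (n : ℕ) :
    Matrix.det (fun i j : Fin n =>
        gbinom X ((((i : ℕ) : ℤ) + 1) - (((j : ℕ) : ℤ) + 1) + (c : ℤ))) =
      ∏ i ∈ Finset.Icc 1 n, poch (X + (i : ℚ) - c) (c : ℤ) / poch (i : ℚ) (c : ℤ) := by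
  have hmat : (fun i j : Fin n => gbinom X ((((i : ℕ) : ℤ) + 1) - (((j : ℕ) : ℤ) + 1) + c))
      = gbinomToeplitz X c n := by
    ext i j
    simp only [gbinomToeplitz, of_apply, add_sub_add_right_eq_sub]
  rw [hmat, det_gbinomToeplitz, ← Ico_add_one_right_eq_Icc, prod_Ico_eq_prod_range,
    Nat.add_sub_cancel]
  refine prod_congr rfl fun k _ => ?_
  have hX : X + ((1 + k : ℕ) : ℚ) - c + c - 1 = X + k := by push_cast; ring
  have hk : ((1 + k : ℕ) : ℚ) + c - 1 = ((k + c : ℕ) : ℚ) := by push_cast; ring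
  rw [poch_natCast_eq_factorial_mul_gbinom, poch_natCast_eq_factorial_mul_gbinom,
    mul_div_mul_left _ _ (by positivity), hX, hk,
    gbinom_natCast_eq_choose, gbinom_natCast_eq_choose, Ring.choose_natCast]
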